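/- arXiv:1503.06509 — 8 statements merged into one kernel-verified Lean document; each statement's English description precedes it below -/
import Mathlib

section
/- A product-free subset S of a group G is locally maximal product-free if and only if G = T(S) ∪ √S, where T(S) = S ∪ SS ∪ SS⁻¹ ∪ S⁻¹S and √S = {x ∈ G : x² ∈ S}. -/
open scoped Pointwise

def productFree {G : Type*} [Group G] (S : Set G) : Prop :=
  ∀ a ∈ S, ∀ b ∈ S, a * b ∉ S

def locallyMaximalPF {G : Type*} [Group G] (S : Set G) : Prop :=
  productFree S ∧ ∀ T : Set G, productFree T → S ⊆ T → T = S

theorem stmt0 {G : Type*} [Group G] (S : Set G) (hne : S.Nonempty)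
    (hpf : productFree S) :
    locallyMaximalPF S ↔
      (Set.univ : Set G) = (S ∪ S * S ∪ S * S⁻¹ ∪ S⁻¹ * S) ∪ {x : G | x ^ 2 ∈ S} := by
  obtain ⟨s0, hs0⟩ := hne
  have h1S : (1 : G) ∉ S := fun h => hpf 1 h 1 h (by simpa)
  have h1T : (1 : G) ∈ S⁻¹ * S := ⟨s0⁻¹, Set.inv_mem_inv.mpr hs0, s0, hs0, inv_mul_cancel s0⟩
  constructor
  · rintro ⟨-, hmax⟩
    symm
    rw [Set.eq_univ_iff_forall]
    intro x
    by_cases hx : x ∈ S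
    · exact Or.inl (Or.inl (Or.inl (Or.inl hx)))
    · have hnpf : ¬ productFree (insert x S) := by
        intro hpf'
        exact hx (hmax _ hpf' (Set.subset_insert _ _) ▸ Set.mem_insert x S)
      simp only [productFree, not_forall, not_not] at hnpf
      obtain ⟨a, ha, b, hb, hab⟩ := hnpf
      rw [Set.mem_insert_iff] at ha hb hab
      rcases ha with ha | ha <;> rcases hb with hb | hb
      · rcases hab with h | h
        · rw [ha, hb] at h
          have hx1 : x = 1 := mul_right_cancel (b := x) (by rw [one_mul]; exact h)
          exact Or.inl (Or.inr (hx1 ▸ h1T))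
        · rw [ha, hb] at h
          exact Or.inr (by simpa [sq] using h)
      · rcases hab with h | h
        · rw [ha] at h
          have hb1 : b = 1 := mul_left_cancel (a := x) (by rw [mul_one]; exact h)
          exact absurd (hb1 ▸ hb) h1S
        · exact Or.inl (Or.inl (Or.inr ⟨a * b, h, b⁻¹, Set.inv_mem_inv.mpr hb, by rw [← ha]; group⟩))
      · rcases hab with h | h
        · rw [hb] at h
          have ha1 : a = 1 := mul_right_cancel (b := x) (by rw [one_mul]; exact h)
          exact absurd (ha1 ▸ ha) h1S
        · exact Or.inl (Or.inr ⟨a⁻¹, Set.inv_mem_inv.mpr ha, a * b, h, by rw [← hb]; group⟩)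
      · rcases hab with h | h
        · exact Or.inl (Or.inl (Or.inl (Or.inr ⟨a, ha, b, hb, h⟩)))
        · exact absurd h (hpf a ha b hb)
  · intro heq
    refine ⟨hpf, fun T hT hST => ?_⟩
    refine Set.Subset.antisymm (fun x hxT => ?_) hST
    by_contra hxS
    have hxU : x ∈ (S ∪ S * S ∪ S * S⁻¹ ∪ S⁻¹ * S) ∪ {x : G | x ^ 2 ∈ S} :=
      heq ▸ Set.mem_univ x
    rcases hxU with (((hx | hx) | hx) | hx) | hx
    · exact hxS hx
    · obtain ⟨a, ha, b, hb, rfl⟩ := hx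
      exact hT a (hST ha) b (hST hb) hxT
    · obtain ⟨a, ha, c, hc, rfl⟩ := hx
      have hc' : c⁻¹ ∈ S := Set.mem_inv.mp hc
      exact hT (a * c) hxT c⁻¹ (hST hc') (by simpa using hST ha)
    · obtain ⟨c, hc, b, hb, rfl⟩ := hx
      have hc' : c⁻¹ ∈ S := Set.mem_inv.mp hc
      exact hT c⁻¹ (hST hc') (c * b) hxT (by simpa [mul_assoc] using hST hb)
    · exact hT x hxT x hxT (hST (by simpa [sq] using hx))
end

section
/- If S is a locally maximal product-free set in a finite group G, then |G| ≤ 2·|T(S)|·|⟨S⟩|, where T(S) = S ∪ SS ∪ SS⁻¹ ∪ S⁻¹S. -/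
open scoped Pointwise

/-!
Write `H = ⟨S⟩`. By local maximality, an element `g ∉ T(S)` with `g² ∉ S` could be added to `S`
keeping it product-free; as `T(S) ⊆ H`, every `g ∉ H` has `g² ∈ S`. If `H ≠ G`, fix `u ∉ H`.
An element `x` commuting with `u` and lying outside `H ∪ u⁻¹H` would give the product
`u² x² = (ux)²` inside `S`, so the centralizer of `u` has at most `2|H|` elements. For `v` outside
`H ∪ u⁻¹H` we get `u (v u v⁻¹) = (uv)² (v²)⁻¹ ∈ S S⁻¹`, so the map `v ↦ v u v⁻¹`, whose fibres are
cosets of the centralizer, sends these `v` into a set of size `|S S⁻¹|`. Hence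
`|G| ≤ 2|H| (|S S⁻¹| + 1)`, and `|S S⁻¹| < |T(S)|` because `S` and `S S⁻¹` are disjoint.
-/

open scoped Finset

section

open Set

variable {G : Type*} [Group G]

def tSet (S : Set G) : Set G := S ∪ S * S ∪ S * S⁻¹ ∪ S⁻¹ * S

theorem one_mem_tSet {S : Set G} (hne : S.Nonempty) : (1 : G) ∈ tSet S :=
  .inl <| .inr <| div_eq_mul_inv S S ▸ hne.one_mem_div

theorem tSet_subset_closure (S : Set G) : tSet S ⊆ Subgroup.closure S := by
  have hS : S ⊆ Subgroup.closure S := Subgroup.subset_closure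
  have hSinv : S⁻¹ ⊆ Subgroup.closure S := fun x hx => inv_mem_iff.1 (hS hx)
  have hmul {A B : Set G} (hA : A ⊆ Subgroup.closure S) (hB : B ⊆ Subgroup.closure S) :
      A * B ⊆ Subgroup.closure S :=
    mul_subset_iff.2 fun a ha b hb => mul_mem (hA ha) (hB hb)
  exact union_subset (union_subset (union_subset hS (hmul hS hS)) (hmul hS hSinv)) (hmul hSinv hS)

namespace productFree

variable {S : Set G} (hS : productFree S)
include hS

theorem one_notMem : (1 : G) ∉ S := fun h1 => hS 1 h1 1 h1 (by simpa using h1)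

theorem disjoint_mul_inv : Disjoint S (S * S⁻¹) := by
  rw [disjoint_left]
  rintro a ha ⟨b, hb, c, hc, rfl⟩
  exact hS _ ha _ (mem_inv.1 hc) (by simpa using hb)

theorem ncard_mul_inv_lt_ncard_tSet [Finite G] (hne : S.Nonempty) :
    (S * S⁻¹).ncard < (tSet S).ncard :=
  calc (S * S⁻¹).ncard < S.ncard + (S * S⁻¹).ncard := by have := hne.ncard_pos; omega
    _ = (S ∪ S * S⁻¹).ncard := (ncard_union_eq hS.disjoint_mul_inv).symm
    _ ≤ (tSet S).ncard := ncard_le_ncard (union_subset (fun _ h => .inl (.inl (.inl h)))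
        (fun _ h => .inl (.inr h)))

theorem insert_of_notMem_tSet (hne : S.Nonempty) {g : G} (hg : g ∉ tSet S) (hgg : g * g ∉ S) :
    productFree (insert g S) := by
  have h1 := hS.one_notMem
  rintro a (rfl | ha) b (rfl | hb) (hab | hab)
  · exact hg (mul_eq_left.1 hab ▸ one_mem_tSet hne)
  · exact hgg hab
  · exact h1 (mul_eq_left.1 hab ▸ hb)
  · exact hg <| .inl <| .inr ⟨a * b, hab, b⁻¹, by simpa using hb, by group⟩
  · exact h1 (mul_eq_right.1 hab ▸ ha)
  · exact hg <| .inr ⟨a⁻¹, by simpa using ha, a * b, hab, by group⟩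
  · exact hg <| .inl <| .inl <| .inr ⟨a, ha, b, hb, hab⟩
  · exact hS a ha b hb hab

end productFree

theorem locallyMaximalPF.mul_self_mem {S : Set G} (h : locallyMaximalPF S) (hne : S.Nonempty)
    {g : G} (hg : g ∉ tSet S) : g * g ∈ S := by
  by_contra hgg
  have hgS : g ∉ S := fun h' => hg (.inl (.inl (.inl h')))
  exact hgS (h.2 _ (h.1.insert_of_notMem_tSet hne hg hgg) (subset_insert g S) ▸ mem_insert g S)

theorem card_filter_conj_eq_le_card_centralizer [Fintype G] [DecidableEq G] (u : G)
    (s : Finset G) (c : G) : #{v ∈ s | v * u * v⁻¹ = c} ≤ Nat.card (Subgroup.centralizer {u}) := by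
  rcases Finset.eq_empty_or_nonempty {v ∈ s | v * u * v⁻¹ = c} with he | ⟨w, hw⟩
  · exact (Finset.card_eq_zero.2 he).trans_le (Nat.zero_le _)
  calc #{v ∈ s | v * u * v⁻¹ = c} = (↑{v ∈ s | v * u * v⁻¹ = c} : Set G).ncard :=
        (ncard_coe_finset _).symm
    _ ≤ (w • (Subgroup.centralizer {u} : Set G)).ncard := ncard_le_ncard fun v hv => by
        rw [Finset.coe_filter] at hv
        rw [Finset.mem_filter] at hw
        rw [mem_smul_set_iff_inv_smul_mem, smul_eq_mul, SetLike.mem_coe,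
          Subgroup.mem_centralizer_singleton_iff]
        calc w⁻¹ * v * u = w⁻¹ * (v * u * v⁻¹) * v := by group
          _ = w⁻¹ * (w * u * w⁻¹) * v := by rw [hv.2, hw.2]
          _ = u * (w⁻¹ * v) := by group
    _ = Nat.card (Subgroup.centralizer {u}) := by
        rw [ncard_smul_set]; exact (Nat.card_coe_set_eq _).symm

section SquaresOutside

variable {S A : Set G} (hS : productFree S) (hsq : ∀ g ∉ A, g * g ∈ S)
include hS hsq

theorem mem_or_mul_mem_of_commute {u x : G} (hu : u ∉ A) (hux : Commute u x) :
    x ∈ A ∨ u * x ∈ A := by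
  by_contra! h
  have hsq_mul : u * x * (u * x) = u * u * (x * x) := by
    rw [mul_assoc, hux.symm.left_comm, ← mul_assoc]
  exact hS _ (hsq u hu) _ (hsq x h.1) (hsq_mul ▸ hsq _ h.2)

theorem card_le_of_forall_notMem_mul_self_mem [Finite G] :
    Nat.card G ≤ 2 * A.ncard * ((S * S⁻¹).ncard + 1) := by
  classical
  have := Fintype.ofFinite G
  by_cases hA : ∀ g, g ∈ A
  · rw [eq_univ_of_forall hA, ncard_univ]
    nlinarith
  obtain ⟨u, hu⟩ := not_forall.1 hA
  set K := A ∪ u⁻¹ • A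
  have hK : K.ncard ≤ 2 * A.ncard := (ncard_union_le _ _).trans (by rw [ncard_smul_set]; omega)
  have hC : Nat.card (Subgroup.centralizer {u}) ≤ 2 * A.ncard := by
    calc Nat.card (Subgroup.centralizer {u}) = (Subgroup.centralizer {u} : Set G).ncard :=
          (Nat.card_coe_set_eq _).symm
      _ ≤ K.ncard := ncard_le_ncard fun x hx => ?_
      _ ≤ 2 * A.ncard := hK
    have hux : Commute u x := (Subgroup.mem_centralizer_singleton_iff.1 hx).symm
    simpa [K, mem_smul_set_iff_inv_smul_mem] using mem_or_mul_mem_of_commute hS hsq hu hux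
  have hcompl : Kᶜ.ncard ≤ 2 * A.ncard * (S * S⁻¹).ncard := by
    rw [ncard_eq_toFinset_card' Kᶜ, ← ncard_smul_set u⁻¹ (S * S⁻¹),
      ncard_eq_toFinset_card' (u⁻¹ • (S * S⁻¹))]
    refine Finset.card_le_mul_card_image_of_maps_to (f := fun v => v * u * v⁻¹) ?_ _
      fun c _ => (card_filter_conj_eq_le_card_centralizer u _ c).trans hC
    intro v hv
    have hv : v ∉ A ∧ u * v ∉ A := by simpa [K, mem_smul_set_iff_inv_smul_mem] using mem_toFinset.1 hv
    rw [mem_toFinset, mem_smul_set_iff_inv_smul_mem, inv_inv, smul_eq_mul]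
    exact ⟨_, hsq _ hv.2, (v * v)⁻¹, by simpa using hsq v hv.1, by group⟩
  calc Nat.card G = K.ncard + Kᶜ.ncard := (ncard_add_ncard_compl K).symm
    _ ≤ 2 * A.ncard + 2 * A.ncard * (S * S⁻¹).ncard := add_le_add hK hcompl
    _ = 2 * A.ncard * ((S * S⁻¹).ncard + 1) := by ring

end SquaresOutside

end

theorem stmt2 {G : Type*} [Group G] [Fintype G] (S : Set G) (hne : S.Nonempty)
    (h : locallyMaximalPF S) :
    Nat.card G ≤ 2 * (S ∪ S * S ∪ S * S⁻¹ ∪ S⁻¹ * S).ncard * Nat.card (Subgroup.closure S) := by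
  have hsq : ∀ g ∉ (Subgroup.closure S : Set G), g * g ∈ S := fun g hg =>
    h.mul_self_mem hne fun hgT => hg (tSet_subset_closure S hgT)
  calc Nat.card G ≤ 2 * Nat.card (Subgroup.closure S) * ((S * S⁻¹).ncard + 1) := by
        rw [← SetLike.coe_sort_coe, Nat.card_coe_set_eq]
        exact card_le_of_forall_notMem_mul_self_mem h.1 hsq
    _ ≤ 2 * Nat.card (Subgroup.closure S) * (tSet S).ncard := by
        gcongr
        exact h.1.ncard_mul_inv_lt_ncard_tSet hne
    _ = 2 * (tSet S).ncard * Nat.card (Subgroup.closure S) := by ring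
end

section
/- If S is a locally maximal product-free set in a finite group G with S ∩ S⁻¹ = ∅, then |G| ≤ 4|S|² + 1. -/
/-!
Adjoining an element `x ∉ S` to a locally maximal product-free set `S` must destroy
product-freeness, which forces `x = 1`, `x² ∈ S` or `x ∈ S ∪ SS ∪ SS⁻¹ ∪ S⁻¹S`. If `x² ∈ S`,
the same applies to `x⁻¹`, whose square cannot also lie in `S` because `S ∩ S⁻¹ = ∅`; hence
`G = {1} ∪ S ∪ S⁻¹ ∪ SS ∪ S⁻¹S⁻¹ ∪ SS⁻¹ ∪ S⁻¹S`. The pairs `(a, a)` all give `1 ∈ SS⁻¹`, so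
`SS⁻¹ \ {1}` and `S⁻¹S \ {1}` have at most `|S|² - |S|` elements each, and
`|G| ≤ 1 + 2|S| + 2|S|² + 2(|S|² - |S|) = 4|S|² + 1`.
-/

open scoped Pointwise

section Cover

variable {G : Type*} [Group G] {S : Set G} {x : G}

lemma productFree.one_notMem_s4 (hS : productFree S) : (1 : G) ∉ S :=
  fun h1 => hS 1 h1 1 h1 (by rwa [one_mul])

lemma productFree.insert (hS : productFree S) (hx : x ≠ 1) (hxx : x * x ∉ S)
    (hSS : x ∉ S * S) (hSS' : x ∉ S * S⁻¹) (hS'S : x ∉ S⁻¹ * S) :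
    productFree (insert x S) := by
  rintro a (rfl | ha) b (rfl | hb) (hab | hab)
  · exact hx (mul_eq_left.mp hab)
  · exact hxx hab
  · exact hS.one_notMem_s4 (mul_eq_left.mp hab ▸ hb)
  · exact hSS' ⟨a * b, hab, b⁻¹, Set.inv_mem_inv.mpr hb, mul_inv_cancel_right a b⟩
  · exact hS.one_notMem_s4 (mul_eq_right.mp hab ▸ ha)
  · exact hS'S ⟨a⁻¹, Set.inv_mem_inv.mpr ha, a * b, hab, inv_mul_cancel_left a b⟩
  · exact hSS ⟨a, ha, b, hb, hab⟩
  · exact hS a ha b hb hab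

lemma locallyMaximalPF.mem_cover (h : locallyMaximalPF S) (hx : x ≠ 1) :
    x ∈ S ∪ S * S ∪ S * S⁻¹ ∪ S⁻¹ * S ∨ x * x ∈ S := by
  by_contra hcon
  simp only [Set.mem_union, not_or] at hcon
  obtain ⟨⟨⟨⟨hxS, hSS⟩, hSS'⟩, hS'S⟩, hxx⟩ := hcon
  have hpf := h.1.insert hx hxx hSS hSS' hS'S
  exact hxS (h.2 _ hpf (Set.subset_insert x S) ▸ Set.mem_insert x S)

lemma locallyMaximalPF.mem_cover_of_inter_inv_eq_empty (h : locallyMaximalPF S)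
    (hdisj : S ∩ S⁻¹ = ∅) (hx : x ≠ 1) :
    x ∈ S ∪ S⁻¹ ∪ S * S ∪ S⁻¹ * S⁻¹ ∪ S * S⁻¹ ∪ S⁻¹ * S := by
  rcases h.mem_cover hx with hC | hxx
  · simp only [Set.mem_union] at hC ⊢
    tauto
  rcases h.mem_cover (inv_ne_one.mpr hx) with hC | hxx'
  · rw [← Set.mem_inv] at hC
    simp only [Set.union_inv, mul_inv_rev, inv_inv, Set.mem_union] at hC ⊢
    tauto
  · have : x * x ∈ S ∩ S⁻¹ := ⟨hxx, by rwa [Set.mem_inv, mul_inv_rev]⟩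
    simp [hdisj] at this

end Cover

namespace Finset

variable {G : Type*} [Group G] [DecidableEq G]

lemma card_mul_inv_erase_one_le (s : Finset G) :
    #((s * s⁻¹).erase 1) ≤ #s * #s - #s := by
  have hsub : (s * s⁻¹).erase 1 ⊆ s.offDiag.image (fun p => p.1 * p.2⁻¹) := by
    intro x hx
    obtain ⟨hx1, a, ha, b, hb, rfl⟩ := by simpa only [mem_erase, mem_mul] using hx
    refine mem_image.mpr ⟨(a, b⁻¹), mem_offDiag.mpr ⟨ha, mem_inv'.mp hb, ?_⟩, by simp⟩
    rintro (hab : a = b⁻¹)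
    exact hx1 (by rw [hab, inv_mul_cancel])
  calc #((s * s⁻¹).erase 1) ≤ #s.offDiag := (card_le_card hsub).trans card_image_le
    _ = #s * #s - #s := offDiag_card s

lemma card_inv_mul_erase_one_le (s : Finset G) :
    #((s⁻¹ * s).erase 1) ≤ #s * #s - #s := by
  simpa only [inv_inv, card_inv] using card_mul_inv_erase_one_le s⁻¹

lemma card_union_products_le (s : Finset G) :
    #(s ∪ s⁻¹ ∪ s * s ∪ s⁻¹ * s⁻¹ ∪ (s * s⁻¹).erase 1 ∪ (s⁻¹ * s).erase 1) ≤ 4 * #s ^ 2 := by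
  have := card_mul_inv_erase_one_le s
  have := card_inv_mul_erase_one_le s
  have : #(s * s) ≤ #s * #s := card_mul_le
  have : #(s⁻¹ * s⁻¹) ≤ #s * #s := card_inv s ▸ card_mul_le
  have : #s ≤ #s * #s := Nat.le_mul_self _
  grw [card_union_le, card_union_le, card_union_le, card_union_le, card_union_le, card_inv]
  rw [sq]
  omega

end Finset

theorem stmt4_general {G : Type*} [Group G] [Fintype G] (S : Set G)
    (h : locallyMaximalPF S) (hdisj : S ∩ S⁻¹ = ∅) :
    Nat.card G ≤ 4 * S.ncard ^ 2 + 1 := by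
  classical
  set s := S.toFinset
  have hsub : Finset.univ.erase 1 ⊆
      s ∪ s⁻¹ ∪ s * s ∪ s⁻¹ * s⁻¹ ∪ (s * s⁻¹).erase 1 ∪ (s⁻¹ * s).erase 1 := by
    intro x hx
    have hx1 := Finset.ne_of_mem_erase hx
    have := h.mem_cover_of_inter_inv_eq_empty hdisj hx1
    rw [← Finset.mem_coe]
    simpa [s, hx1, or_assoc] using this
  calc Nat.card G = (Finset.univ.erase (1 : G)).card + 1 := by
        rw [Finset.card_erase_add_one (Finset.mem_univ 1), Finset.card_univ,
          Nat.card_eq_fintype_card]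
    _ ≤ 4 * s.card ^ 2 + 1 := by grw [Finset.card_le_card hsub, Finset.card_union_products_le]
    _ = 4 * S.ncard ^ 2 + 1 := by rw [Set.ncard_eq_toFinset_card']

theorem stmt4 {G : Type*} [Group G] [Fintype G] (S : Set G) (hne : S.Nonempty)
    (h : locallyMaximalPF S) (hdisj : S ∩ S⁻¹ = ∅) :
    Nat.card G ≤ 4 * S.ncard ^ 2 + 1 :=
  stmt4_general S h hdisj
end

section
/- In the cyclic group C₆ = ⟨g : g⁶ = 1⟩, the set {g, g³, g⁵} is the unique locally maximal product-free set of size 3. -/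
open scoped Pointwise

abbrev M6 := Multiplicative (ZMod 6)

def pfF (F : Finset M6) : Prop := ∀ a ∈ F, ∀ b ∈ F, a * b ∉ F

instance : DecidablePred pfF := fun _ => by unfold pfF; infer_instance

def lmF (F : Finset M6) : Prop := pfF F ∧ ∀ T : Finset M6, pfF T → F ⊆ T → T = F

instance : DecidablePred lmF := fun _ => by unfold lmF; infer_instance

lemma key : ∀ F : Finset M6, (lmF F ∧ F.card = 3) ↔
    F = {Multiplicative.ofAdd 1, Multiplicative.ofAdd 3, Multiplicative.ofAdd 5} := by decide

lemma pf_coe (F : Finset M6) : productFree (↑F : Set M6) ↔ pfF F := by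
  simp [productFree, pfF]

lemma lm_coe (F : Finset M6) : locallyMaximalPF (↑F : Set M6) ↔ lmF F := by
  constructor
  · rintro ⟨h1, h2⟩
    refine ⟨(pf_coe F).1 h1, fun T hT hsub => ?_⟩
    have := h2 (↑T) ((pf_coe T).2 hT) (by exact_mod_cast hsub)
    exact_mod_cast this
  · rintro ⟨h1, h2⟩
    refine ⟨(pf_coe F).2 h1, fun T hT hsub => ?_⟩
    have hTfin : T.Finite := Set.toFinite T
    have hTcoe : (↑hTfin.toFinset : Set M6) = T := hTfin.coe_toFinset
    have hpf : pfF hTfin.toFinset := by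
      rw [← pf_coe, hTcoe]; exact hT
    have hsub' : F ⊆ hTfin.toFinset := by
      intro x hx
      rw [Set.Finite.mem_toFinset]
      exact hsub hx
    have := h2 hTfin.toFinset hpf hsub'
    rw [← hTcoe, this]

section transfer

variable {H G : Type*} [Group H] [Group G] (e : H ≃* G)

lemma pf_image (S : Set H) : productFree (e '' S) ↔ productFree S := by
  constructor
  · intro h a ha b hb hab
    exact h _ ⟨a, ha, rfl⟩ _ ⟨b, hb, rfl⟩ (by rw [← map_mul]; exact ⟨a * b, hab, rfl⟩)
  · rintro h _ ⟨a, ha, rfl⟩ _ ⟨b, hb, rfl⟩ ⟨c, hc, hcab⟩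
    rw [← map_mul] at hcab
    exact h a ha b hb (e.injective hcab ▸ hc)

lemma lm_image (S : Set H) : locallyMaximalPF (e '' S) ↔ locallyMaximalPF S := by
  constructor
  · rintro ⟨h1, h2⟩
    refine ⟨(pf_image e S).1 h1, fun T hT hsub => ?_⟩
    have := h2 (e '' T) ((pf_image e T).2 hT) (Set.image_mono hsub)
    exact Set.image_injective.2 e.injective this
  · rintro ⟨h1, h2⟩
    refine ⟨(pf_image e S).2 h1, fun T hT hsub => ?_⟩
    have hT' : productFree (⇑e.symm '' T) := (pf_image e.symm T).2 hT
    have hsub' : S ⊆ ⇑e.symm '' T := by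
      intro x hx
      exact ⟨e x, hsub ⟨x, hx, rfl⟩, e.symm_apply_apply x⟩
    have := h2 _ hT' hsub'
    calc T = e '' (⇑e.symm '' T) := by
            rw [Set.image_image]; simp
      _ = e '' S := by rw [this]

end transfer

theorem stmt7 {G : Type*} [Group G] [Fintype G] (hG : Fintype.card G = 6)
    (g : G) (hg : orderOf g = 6) (S : Set G) :
    (locallyMaximalPF S ∧ S.ncard = 3) ↔ S = {g, g ^ 3, g ^ 5} := by
  classical
  -- build the isomorphism M6 ≃* G
  have hpow : ∀ x y : ZMod 6, g ^ (x + y).val = g ^ x.val * g ^ y.val := by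
    intro x y
    rw [← pow_add, pow_eq_pow_iff_modEq, hg]
    have : ((x + y).val : ZMod 6) = ((x.val + y.val : ℕ) : ZMod 6) := by
      push_cast [ZMod.natCast_val]
      simp [ZMod.cast_id]
    exact (ZMod.natCast_eq_natCast_iff _ _ _).1 this
  let φ : M6 →* G :=
    { toFun := fun x => g ^ (Multiplicative.toAdd x).val
      map_one' := by simp
      map_mul' := fun x y => hpow _ _ }
  have hinj : Function.Injective φ := by
    rw [injective_iff_map_eq_one]
    intro x hx
    have h1 : orderOf g ∣ (Multiplicative.toAdd x).val := orderOf_dvd_of_pow_eq_one hx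
    rw [hg] at h1
    have h2 : (Multiplicative.toAdd x).val < 6 := ZMod.val_lt _
    have h3 : (Multiplicative.toAdd x).val = 0 := Nat.eq_zero_of_dvd_of_lt h1 h2
    have : Multiplicative.toAdd x = 0 := by
      rwa [ZMod.val_eq_zero] at h3
    simpa using this
  have hcard : Fintype.card M6 = Fintype.card G := by
    simp [hG, M6]
  have hbij : Function.Bijective φ :=
    (Fintype.bijective_iff_injective_and_card φ).2 ⟨hinj, hcard⟩
  let e : M6 ≃* G := MulEquiv.ofBijective φ hbij
  have hS : S = e '' (⇑e.symm '' S) := by rw [Set.image_image]; simp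
  have hfin : (⇑e.symm '' S).Finite := Set.toFinite _
  rw [hS, lm_image, Set.ncard_image_of_injective _ e.injective,
    ← hfin.coe_toFinset, lm_coe, Set.ncard_coe_finset, key]
  have he1 : e (Multiplicative.ofAdd 1) = g := by
    show g ^ (1 : ZMod 6).val = g
    norm_num [show (1 : ZMod 6).val = 1 from rfl]
  have he3 : e (Multiplicative.ofAdd 3) = g ^ 3 := by
    show g ^ (3 : ZMod 6).val = g ^ 3
    norm_num [show (3 : ZMod 6).val = 3 from rfl]
  have he5 : e (Multiplicative.ofAdd 5) = g ^ 5 := by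
    show g ^ (5 : ZMod 6).val = g ^ 5
    norm_num [show (5 : ZMod 6).val = 5 from rfl]
  have him : e '' (↑({Multiplicative.ofAdd 1, Multiplicative.ofAdd 3,
      Multiplicative.ofAdd 5} : Finset M6) : Set M6) = {g, g ^ 3, g ^ 5} := by
    simp only [Finset.coe_insert, Finset.coe_singleton, Set.image_insert_eq,
      Set.image_singleton, he1, he3, he5]
  constructor
  · rintro h
    rw [h]
    exact him
  · intro h
    have h2 : (↑hfin.toFinset : Set M6) = ↑({Multiplicative.ofAdd 1, Multiplicative.ofAdd 3,
        Multiplicative.ofAdd 5} : Finset M6) :=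
      Set.image_injective.2 e.injective (h.trans him.symm)
    exact_mod_cast h2
end

section
/- In the cyclic group C₈ of order 8, every locally maximal product-free set of size 3 has the form {g, g⁻¹, g⁴} for some element g of order 8. -/
open scoped Pointwise

set_option maxRecDepth 10000 in
lemma key8 : ∀ S : Finset (ZMod 8), (∀ a ∈ S, ∀ b ∈ S, a + b ∉ S) →
    (∀ x ∉ S, ∃ a ∈ insert x S, ∃ b ∈ insert x S, a + b ∈ insert x S) →
    S.card = 3 → ∃ g : ZMod 8, (4 : ℕ) • g ≠ 0 ∧ S = {g, -g, (4:ℕ) • g} := by decide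

theorem stmt8 {G : Type*} [Group G] [Fintype G] (hG : Fintype.card G = 8)
    (hcyc : IsCyclic G) (S : Set G) (h : locallyMaximalPF S) (hcard : S.ncard = 3) :
    ∃ g : G, orderOf g = 8 ∧ S = {g, g⁻¹, g ^ 4} := by
  haveI := hcyc
  have hNcard : Nat.card G = 8 := by rw [Nat.card_eq_fintype_card, hG]
  have hcard' : Nat.card (Multiplicative (ZMod 8)) = Nat.card G := by
    rw [hNcard, Nat.card_eq_fintype_card]; rfl
  let e : Multiplicative (ZMod 8) ≃* G := mulEquivOfCyclicCardEq hcard'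
  set φ : ZMod 8 → G := fun a => e (Multiplicative.ofAdd a) with hφ
  have hφmul : ∀ a b : ZMod 8, φ (a + b) = φ a * φ b := by
    intro a b; simp [hφ, ofAdd_add]
  have hφinj : Function.Injective φ :=
    e.injective.comp (Multiplicative.ofAdd).injective
  have hφsurj : Function.Surjective φ :=
    e.surjective.comp (Multiplicative.ofAdd).surjective
  have hφ0 : φ 0 = 1 := by simp [hφ]
  have hφneg : ∀ a : ZMod 8, φ (-a) = (φ a)⁻¹ := by
    intro a
    have := hφmul (-a) a
    rw [neg_add_cancel, hφ0] at this
    exact eq_inv_of_mul_eq_one_left this.symm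
  have hφsmul : ∀ a : ZMod 8, φ ((4:ℕ) • a) = (φ a) ^ 4 := by
    intro a; rw [hφ]; simp only [ofAdd_nsmul, map_pow]
  set S' : Set (ZMod 8) := φ ⁻¹' S with hS'
  have hSim : S = φ '' S' := (Set.image_preimage_eq S hφsurj).symm
  have hS'fin : S'.Finite := Set.toFinite _
  set F : Finset (ZMod 8) := hS'fin.toFinset with hF
  have hmemF : ∀ a, a ∈ F ↔ φ a ∈ S := by
    intro a; rw [hF, Set.Finite.mem_toFinset]; rfl
  -- product free
  have h1 : ∀ a ∈ F, ∀ b ∈ F, a + b ∉ F := by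
    intro a ha b hb hab
    rw [hmemF] at ha hb hab
    rw [hφmul] at hab
    exact h.1 _ ha _ hb hab
  -- maximality
  have h2 : ∀ x ∉ F, ∃ a ∈ insert x F, ∃ b ∈ insert x F, a + b ∈ insert x F := by
    intro x hx
    rw [hmemF] at hx
    have hnpf : ¬ productFree (insert (φ x) S) := by
      intro hpf
      have := h.2 _ hpf (Set.subset_insert _ _)
      rw [← this] at hx
      exact hx (Set.mem_insert _ _)
    unfold productFree at hnpf
    push_neg at hnpf
    obtain ⟨a, ha, b, hb, hab⟩ := hnpf
    have hins : ∀ y : ZMod 8, φ y ∈ insert (φ x) S ↔ y ∈ insert x F := by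
      intro y
      simp only [Set.mem_insert_iff, Finset.mem_insert, hmemF]
      constructor
      · rintro (hy | hy)
        · exact Or.inl (hφinj hy)
        · exact Or.inr hy
      · rintro (rfl | hy)
        · exact Or.inl rfl
        · exact Or.inr hy
    obtain ⟨a', rfl⟩ := hφsurj a
    obtain ⟨b', rfl⟩ := hφsurj b
    rw [← hφmul] at hab
    exact ⟨a', (hins a').mp ha, b', (hins b').mp hb, (hins _).mp hab⟩
  -- cardinality
  have h3 : F.card = 3 := by
    rw [hF, ← Set.ncard_eq_toFinset_card _ hS'fin]
    rw [hSim, Set.ncard_image_of_injective _ hφinj] at hcard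
    exact hcard
  obtain ⟨g, hg4, hFeq⟩ := key8 F h1 h2 h3
  refine ⟨φ g, ?_, ?_⟩
  · -- order
    have hpow : (φ g) ^ 4 ≠ 1 := by rw [← hφsmul, ← hφ0]; exact fun hh => hg4 (hφinj hh)
    have hdvd : orderOf (φ g) ∣ 8 := hG ▸ orderOf_dvd_card
    have hnd : ¬ orderOf (φ g) ∣ 4 := fun hd => hpow (orderOf_dvd_iff_pow_eq_one.mp hd)
    have hle : orderOf (φ g) ≤ 8 := Nat.le_of_dvd (by norm_num) hdvd
    have hpos : 0 < orderOf (φ g) := orderOf_pos _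
    interval_cases hh : (orderOf (φ g)) <;> revert hdvd hnd <;> decide
  · -- set equality
    have : S' = {g, -g, (4:ℕ) • g} := by
      rw [← hS'fin.coe_toFinset, ← hF, hFeq]
      simp only [Finset.coe_insert, Finset.coe_singleton]
    rw [hSim, this]
    simp only [Set.image_insert_eq, Set.image_singleton, hφneg, hφsmul]
end

section
/- No group of order 16 contains fourteen elements of order 4. -/
open scoped Pointwise

theorem stmt11 {G : Type*} [Group G] [Fintype G] (hG : Fintype.card G = 16) :
    {g : G | orderOf g = 4}.ncard ≠ 14 := by
  intro h14
  classical
  -- a unique involution z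
  obtain ⟨z, hz⟩ := exists_prime_orderOf_dvd_card (G := G) 2 (by rw [hG]; norm_num)
  have hz1 : z ≠ 1 := by
    intro h; rw [h, orderOf_one] at hz; norm_num at hz
  have hzz : z * z = 1 := by
    have := pow_orderOf_eq_one z
    rw [hz, pow_two] at this
    exact this
  -- the only elements not of order 4 are 1 and z
  have hS : (Finset.univ.filter (fun g : G => orderOf g = 4)).card = 14 := by
    rw [Set.ncard_eq_toFinset_card'] at h14
    simpa using h14
  have hB : (Finset.univ.filter (fun g : G => ¬ orderOf g = 4)).card = 2 := by
    have h := Finset.card_filter_add_card_filter_not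
      (s := (Finset.univ : Finset G)) (p := fun g : G => orderOf g = 4)
    rw [Finset.card_univ, hG, hS] at h
    omega
  have hclass : ∀ g : G, orderOf g ≠ 4 → g = 1 ∨ g = z := by
    intro g hg
    have hsub : ({1, z} : Finset G) ⊆ Finset.univ.filter (fun g : G => ¬ orderOf g = 4) := by
      intro a ha
      simp only [Finset.mem_insert, Finset.mem_singleton] at ha
      rcases ha with rfl | rfl
      · simp
      · simp [hz]
    have hcard : (Finset.univ.filter (fun g : G => ¬ orderOf g = 4)).card ≤
        ({1, z} : Finset G).card := by
      rw [hB, Finset.card_insert_of_notMem (by simpa using hz1.symm), Finset.card_singleton]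
    have heq := Finset.eq_of_subset_of_card_le hsub hcard
    have hmem : g ∈ ({1, z} : Finset G) := by
      rw [heq]; simp [hg]
    simpa using hmem
  -- order-4 elements square to z
  have hsq : ∀ g : G, orderOf g = 4 → g * g = z := by
    intro g hg
    have h2 : orderOf (g * g) = 2 := by
      rw [← pow_two, orderOf_pow, hg]
      norm_num
    rcases hclass (g * g) (by rw [h2]; norm_num) with h | h
    · rw [h] at h2; rw [orderOf_one] at h2; norm_num at h2
    · exact h
  have hinv : ∀ g : G, orderOf g = 4 → g⁻¹ = g * z := by
    intro g hg
    apply inv_eq_of_mul_eq_one_right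
    rw [← mul_assoc, hsq g hg, hzz]
  have hzcomm : ∀ g : G, orderOf g = 4 → g * z = z * g := by
    intro g hg
    rw [← hsq g hg]; group
  -- products of "independent" order-4 elements have order 4
  have hprod : ∀ x y : G, orderOf x = 4 → orderOf y = 4 → y ≠ x → y ≠ x * z →
      orderOf (x * y) = 4 := by
    intro x y hx hy h1 h2
    by_contra h
    rcases hclass _ h with h' | h'
    · apply h2
      have : y = x⁻¹ := by
        calc y = x⁻¹ * (x * y) := by group
        _ = x⁻¹ := by rw [h', mul_one]
      rw [this, hinv x hx]
    · apply h1
      have hy' : y = x⁻¹ * z := by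
        calc y = x⁻¹ * (x * y) := by group
        _ = x⁻¹ * z := by rw [h']
      rw [hy', hinv x hx, mul_assoc, hzz, mul_one]
  -- the quasi-commutation relation
  have hkey : ∀ x y : G, orderOf x = 4 → orderOf y = 4 → y ≠ x → y ≠ x * z →
      y * x = x * y * z := by
    intro x y hx hy h1 h2
    have hp := hprod x y hx hy h1 h2
    have hpz : (x * y) * (x * y) = z := hsq _ hp
    have hx2 : x * x = z := hsq x hx
    have h3 : y * x * y = x := by
      have hc : x * (y * x * y) = x * x := by
        calc x * (y * x * y) = (x * y) * (x * y) := by group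
        _ = z := hpz
        _ = x * x := hx2.symm
      exact mul_left_cancel hc
    have h4 : y * x = x * y⁻¹ := by
      have := congrArg (· * y⁻¹) h3
      simpa [mul_assoc] using this
    rw [h4, hinv y hy, ← mul_assoc]
  -- pick x of order 4
  have hne : ({g : G | orderOf g = 4}).Nonempty :=
    Set.nonempty_of_ncard_ne_zero (by rw [h14]; norm_num)
  obtain ⟨x, hx⟩ := hne
  rw [Set.mem_setOf_eq] at hx
  -- pick y of order 4 outside ⟨x⟩
  have hy' : ∃ y : G, orderOf y = 4 ∧ y ≠ x ∧ y ≠ x * z := by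
    by_contra hc
    push_neg at hc
    have hsub : {g : G | orderOf g = 4} ⊆ ({x, x * z} : Set G) := by
      intro g hg
      rw [Set.mem_setOf_eq] at hg
      rcases eq_or_ne g x with h | h
      · exact Set.mem_insert_iff.mpr (Or.inl h)
      · exact Set.mem_insert_iff.mpr (Or.inr (hc g hg h))
    have hle := Set.ncard_le_ncard hsub (Set.toFinite _)
    have h2 : ({x, x * z} : Set G).ncard ≤ 2 := by
      refine le_trans (Set.ncard_insert_le _ _) ?_
      simp [Set.ncard_singleton]
    omega
  obtain ⟨y, hy, hyx, hyxz⟩ := hy'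
  have hxy4 : orderOf (x * y) = 4 := hprod x y hx hy hyx hyxz
  -- pick w of order 4 outside ⟨x, y⟩
  have hw' : ∃ w : G, orderOf w = 4 ∧ w ≠ x ∧ w ≠ x * z ∧ w ≠ y ∧ w ≠ y * z ∧
      w ≠ x * y ∧ w ≠ (x * y) * z := by
    by_contra hc
    push_neg at hc
    have hsub : {g : G | orderOf g = 4} ⊆
        ({x, x * z, y, y * z, x * y, (x * y) * z} : Set G) := by
      intro g hg
      rw [Set.mem_setOf_eq] at hg
      simp only [Set.mem_insert_iff, Set.mem_singleton_iff]
      rcases eq_or_ne g x with h | h1; · tauto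
      rcases eq_or_ne g (x * z) with h | h2; · tauto
      rcases eq_or_ne g y with h | h3; · tauto
      rcases eq_or_ne g (y * z) with h | h4; · tauto
      rcases eq_or_ne g (x * y) with h | h5; · tauto
      have := hc g hg h1 h2 h3 h4 h5
      tauto
    have hle := Set.ncard_le_ncard hsub (Set.toFinite _)
    have h6 : ({x, x * z, y, y * z, x * y, (x * y) * z} : Set G).ncard ≤ 6 := by
      refine le_trans (Set.ncard_insert_le _ _) ?_
      refine le_trans (Nat.add_le_add_right (Set.ncard_insert_le _ _) 1) ?_
      refine le_trans (Nat.add_le_add_right (Nat.add_le_add_right (Set.ncard_insert_le _ _) 1) 1) ?_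
      refine le_trans (Nat.add_le_add_right (Nat.add_le_add_right
        (Nat.add_le_add_right (Set.ncard_insert_le _ _) 1) 1) 1) ?_
      refine le_trans (Nat.add_le_add_right (Nat.add_le_add_right (Nat.add_le_add_right
        (Nat.add_le_add_right (Set.ncard_insert_le _ _) 1) 1) 1) 1) ?_
      simp [Set.ncard_singleton]
    omega
  obtain ⟨w, hw, hwx, hwxz, hwy, hwyz, hwxy, hwxyz⟩ := hw'
  -- the three relations
  have e1 : w * x = x * w * z := hkey x w hx hw hwx hwxz
  have e2 : w * y = y * w * z := hkey y w hy hw hwy hwyz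
  have e3 : w * (x * y) = (x * y) * w * z := hkey (x * y) w hxy4 hw hwxy hwxyz
  -- derive z = 1
  have hzy : z * y = y * z := (hzcomm y hy).symm
  have hcontr : (x * y) * w * z = (x * y) * w := by
    calc (x * y) * w * z = w * (x * y) := e3.symm
    _ = (w * x) * y := by group
    _ = x * w * z * y := by rw [e1]
    _ = x * w * (y * z) := by rw [mul_assoc (x * w) z y, hzy]
    _ = x * (w * y) * z := by group
    _ = x * (y * w * z) * z := by rw [e2]
    _ = (x * y) * w * (z * z) := by group
    _ = (x * y) * w := by rw [hzz, mul_one]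
  have : z = 1 := by
    have h := hcontr
    calc z = ((x * y) * w)⁻¹ * ((x * y) * w * z) := by group
    _ = ((x * y) * w)⁻¹ * ((x * y) * w) := by rw [h]
    _ = 1 := by group
  exact hz1 this
end

section
/- There is no group G of order 48 whose element orders are as follows: exactly two elements of order 3, exactly three elements of order 2, and all other non-identity elements of order 4. -/
open scoped Pointwise

theorem stmt12 {G : Type*} [Group G] [Fintype G] (hG : Fintype.card G = 48)
    (h3 : {g : G | orderOf g = 3}.ncard = 2)
    (h2 : {g : G | orderOf g = 2}.ncard = 3)
    (h4 : ∀ g : G, g ≠ 1 → orderOf g ≠ 2 → orderOf g ≠ 3 → orderOf g = 4) :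
    False := by
  classical
  -- get an element of order 3
  obtain ⟨y, hy⟩ : ∃ y : G, orderOf y = 3 := by
    have hne : {g : G | orderOf g = 3}.Nonempty := by
      rw [← Set.ncard_pos (Set.toFinite _)]
      omega
    exact hne
  -- orbit of y under conjugation is contained in the order-3 set
  have horb : MulAction.orbit (ConjAct G) y ⊆ {g : G | orderOf g = 3} := by
    rintro a ⟨g, rfl⟩
    have : SemiconjBy (ConjAct.ofConjAct g) y (g • y) := by
      rw [ConjAct.smul_def]
      simp [SemiconjBy, mul_assoc]
    simpa [Set.mem_setOf_eq, ← hy] using (SemiconjBy.orderOf_eq _ this).symm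
  have hcardorb : Fintype.card (MulAction.orbit (ConjAct G) y) ≤ 2 := by
    have h1 : (MulAction.orbit (ConjAct G) y).ncard ≤ 2 := by
      rw [← h3]
      exact Set.ncard_le_ncard horb (Set.toFinite _)
    rwa [← Nat.card_coe_set_eq, Nat.card_eq_fintype_card] at h1
  -- orbit-stabilizer
  have hos := MulAction.card_orbit_mul_card_stabilizer_eq_card_group (ConjAct G) y
  have hcardG : Fintype.card (ConjAct G) = 48 := by
    rw [Fintype.card_congr ConjAct.ofConjAct.toEquiv, hG]
  have hstab : 24 ≤ Fintype.card (MulAction.stabilizer (ConjAct G) y) := by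
    by_contra hc
    push_neg at hc
    have := Nat.mul_le_mul hcardorb (Nat.le_of_lt_succ hc)
    omega
  -- find an element of order 4 commuting with y
  obtain ⟨x, hxy, hx4⟩ : ∃ x : G, Commute x y ∧ orderOf x = 4 := by
    by_contra hc
    push_neg at hc
    set S : Set G := ConjAct.ofConjAct '' ((MulAction.stabilizer (ConjAct G) y : Set (ConjAct G)))
    have hScomm : ∀ x ∈ S, Commute x y := by
      rintro x ⟨g, hg, rfl⟩
      have hfix : g • y = y := hg
      rw [ConjAct.smul_def] at hfix
      have : ConjAct.ofConjAct g * y = y * ConjAct.ofConjAct g := by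
        have := congrArg (· * ConjAct.ofConjAct g) hfix
        simpa [mul_assoc] using this
      exact this
    have hSsub : S ⊆ {g : G | orderOf g = 2} ∪ {g : G | orderOf g = 3} ∪ {(1 : G)} := by
      intro x hx
      have hcomm := hScomm x hx
      have hne4 := hc x hcomm
      by_cases hx1 : x = 1
      · exact Or.inr hx1
      by_cases hx2 : orderOf x = 2
      · exact Or.inl (Or.inl hx2)
      by_cases hx3 : orderOf x = 3
      · exact Or.inl (Or.inr hx3)
      exact absurd (h4 x hx1 hx2 hx3) hne4
    have hSbig : 24 ≤ S.ncard := by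
      have : S.ncard = Fintype.card (MulAction.stabilizer (ConjAct G) y) := by
        rw [Set.ncard_image_of_injective _ ConjAct.ofConjAct.injective,
          ← Nat.card_coe_set_eq]
        simp [Nat.card_eq_fintype_card]
      omega
    have hSsmall : S.ncard ≤ 6 := by
      calc S.ncard ≤ ({g : G | orderOf g = 2} ∪ {g : G | orderOf g = 3} ∪ {(1 : G)}).ncard :=
            Set.ncard_le_ncard hSsub (Set.toFinite _)
        _ ≤ ({g : G | orderOf g = 2} ∪ {g : G | orderOf g = 3}).ncard + ({(1 : G)} : Set G).ncard :=
            Set.ncard_union_le _ _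
        _ ≤ ({g : G | orderOf g = 2}).ncard + ({g : G | orderOf g = 3}).ncard
              + ({(1 : G)} : Set G).ncard := by
            have := Set.ncard_union_le {g : G | orderOf g = 2} {g : G | orderOf g = 3}
            omega
        _ ≤ 6 := by rw [h2, h3, Set.ncard_singleton]
    omega
  -- x * y has order 12, contradiction
  have h12 : orderOf (x * y) = 12 := by
    rw [hxy.orderOf_mul_eq_mul_orderOf_of_coprime (by rw [hx4, hy]; norm_num), hx4, hy]
  have hne1 : x * y ≠ 1 := by
    intro h
    rw [h, orderOf_one] at h12
    omega
  have := h4 (x * y) hne1 (by omega) (by omega)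
  omega
end

section
/- Let S be a locally maximal product-free set of size 3 in a group G such that every 2-element subset of S generates ⟨S⟩. If S contains at least two involutions, then ⟨S⟩ is isomorphic to the dihedral group D₆ of order 6 and S consists of the three reflections of ⟨S⟩. -/
open scoped Pointwise

namespace PF13
variable {G : Type*} [Group G]

lemma conj_pow {a r : G} (ha : a * a = 1) (hc : a * r * a = r⁻¹) (k : ℤ) :
    a * r ^ k = r ^ (-k) * a := by
  have hainv : a⁻¹ = a := inv_eq_of_mul_eq_one_right ha
  have h1 : (a * r * a⁻¹) ^ k = a * r ^ k * a⁻¹ := conj_zpow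
  rw [hainv, hc] at h1
  have h2 : r ^ (-k) = a * r ^ k * a := by
    rw [zpow_neg, ← inv_zpow, h1]
  rw [h2, mul_assoc, mul_assoc, ha, mul_one]

lemma mem_closure_pair {a r : G} (ha : a * a = 1) (hc : a * r * a = r⁻¹) :
    ∀ x ∈ Subgroup.closure ({a, r} : Set G), ∃ k : ℤ, x = r ^ k ∨ x = r ^ k * a := by
  have hainv : a⁻¹ = a := inv_eq_of_mul_eq_one_right ha
  let K : Subgroup G :=
    { carrier := {x | ∃ k : ℤ, x = r ^ k ∨ x = r ^ k * a}
      one_mem' := ⟨0, Or.inl (by simp)⟩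
      mul_mem' := by
        rintro x y ⟨k, rfl | rfl⟩ ⟨l, rfl | rfl⟩
        · exact ⟨k + l, Or.inl (by rw [zpow_add])⟩
        · exact ⟨k + l, Or.inr (by rw [zpow_add, mul_assoc])⟩
        · refine ⟨k - l, Or.inr ?_⟩
          rw [mul_assoc, conj_pow ha hc, ← mul_assoc, ← zpow_add]
          ring_nf
        · refine ⟨k - l, Or.inl ?_⟩
          rw [mul_assoc, ← mul_assoc a, conj_pow ha hc, mul_assoc, ha, mul_one,
            ← zpow_add]
          ring_nf
      inv_mem' := by
        rintro x ⟨k, rfl | rfl⟩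
        · exact ⟨-k, Or.inl (zpow_neg r k).symm⟩
        · refine ⟨k, Or.inr ?_⟩
          rw [mul_inv_rev, hainv, ← zpow_neg, conj_pow ha hc, neg_neg] }
  intro x hx
  exact (Subgroup.closure_le K).mpr (by
    intro y hy
    rcases hy with rfl | hy
    · exact ⟨0, Or.inr (by simp)⟩
    · rcases hy with rfl
      exact ⟨1, Or.inl (by simp)⟩) hx

end PF13

theorem stmt13 {G : Type*} [Group G] [Fintype G] (S : Set G) (hcard : S.ncard = 3)
    (h : locallyMaximalPF S)
    (hgen : ∀ x ∈ S, ∀ y ∈ S, x ≠ y → Subgroup.closure {x, y} = Subgroup.closure S)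
    (hinv : ∃ a ∈ S, ∃ b ∈ S, a ≠ b ∧ orderOf a = 2 ∧ orderOf b = 2) :
    Nonempty (↥(Subgroup.closure S) ≃* DihedralGroup 3) ∧ ∀ s ∈ S, orderOf s = 2 := by
  classical
  obtain ⟨a, haS, b, hbS, hab, ha2, hb2⟩ := hinv
  have haa : a * a = 1 := by
    have := pow_orderOf_eq_one a; rwa [ha2, pow_two] at this
  have hbb : b * b = 1 := by
    have := pow_orderOf_eq_one b; rwa [hb2, pow_two] at this
  have hainv : a⁻¹ = a := inv_eq_of_mul_eq_one_right haa
  have hbinv : b⁻¹ = b := inv_eq_of_mul_eq_one_right hbb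
  have h1S : (1 : G) ∉ S := fun h1 => h.1 1 h1 1 h1 (by rwa [one_mul])
  -- extract c
  have hfin : S.Finite := S.toFinite
  obtain ⟨c, hcS, hcab⟩ : ∃ c ∈ S, c ∉ ({a, b} : Set G) := by
    refine Set.exists_mem_notMem_of_ncard_lt_ncard ?_ (Set.toFinite _)
    rw [hcard]
    exact lt_of_le_of_lt (Set.ncard_insert_le a {b}) (by simp)
  have hca : c ≠ a := fun e => hcab (by simp [e])
  have hcb : c ≠ b := fun e => hcab (by simp [e])
  have hSeq : S = {a, b, c} := by
    refine (Set.eq_of_subset_of_ncard_le ?_ ?_ hfin).symm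
    · intro x hx; rcases hx with rfl | rfl | rfl <;> assumption
    · rw [hcard]
      refine le_of_eq (Set.ncard_eq_three.mpr ⟨a, b, c, hab, hca.symm, hcb.symm, rfl⟩).symm
  have hc1 : c ≠ 1 := fun e => h1S (e ▸ hcS)
  have habS : a * b ∉ S := h.1 a haS b hbS
  have hbaS : b * a ∉ S := h.1 b hbS a haS
  -- nonabelian
  have hclos : Subgroup.closure {a, b} = Subgroup.closure S := hgen a haS b hbS hab
  have hnab : a * b ≠ b * a := by
    intro hcm
    have hK : ∀ x ∈ Subgroup.closure ({a, b} : Set G), x ∈ ({1, a, b, a * b} : Set G) := by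
      have ha' : ∀ x : G, a * (a * x) = x := fun x => by rw [← mul_assoc, haa, one_mul]
      have hb' : ∀ x : G, b * (b * x) = x := fun x => by rw [← mul_assoc, hbb, one_mul]
      have hba' : ∀ x : G, b * (a * x) = a * (b * x) := fun x => by
        rw [← mul_assoc, ← hcm, mul_assoc]
      let K : Subgroup G :=
        { carrier := {1, a, b, a * b}
          one_mem' := by simp
          mul_mem' := by
            rintro x y (rfl | rfl | rfl | rfl) (rfl | rfl | rfl | rfl) <;>
              simp only [Set.mem_insert_iff, Set.mem_singleton_iff, mul_assoc, ha', hb',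
                hba', ← hcm, haa, hbb, mul_one, one_mul] <;> tauto
          inv_mem' := by
            rintro x (rfl | rfl | rfl | rfl) <;>
              simp only [Set.mem_insert_iff, Set.mem_singleton_iff, mul_inv_rev, hainv, hbinv,
                inv_one] <;> tauto }
      intro x hx
      exact (Subgroup.closure_le K).mpr (by
        intro y hy
        rcases hy with rfl | hy
        · exact Or.inr (Or.inl rfl)
        · rcases hy with rfl; exact Or.inr (Or.inr (Or.inl rfl))) hx
    have hcK : c ∈ ({1, a, b, a * b} : Set G) :=
      hK c (by rw [hclos]; exact Subgroup.subset_closure hcS)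
    rcases hcK with rfl | rfl | rfl | hcK
    · exact hc1 rfl
    · exact hca rfl
    · exact hcb rfl
    · exact habS (hcK ▸ hcS)
  -- dihedral setup
  set r := a * b with hr
  have hbar : b = a * r := by rw [hr, ← mul_assoc, haa, one_mul]
  have harconj : a * r * a = r⁻¹ := by
    rw [hr, ← mul_assoc, haa, one_mul, mul_inv_rev, hbinv, hainv]
  have hr1 : r ≠ 1 := by
    intro e
    have e' : a * b = 1 := by rw [← hr]; exact e
    exact hab (by rw [eq_inv_of_mul_eq_one_left e', hbinv])
  have hr2 : r ^ (2 : ℤ) ≠ 1 := by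
    intro e
    rw [show (2:ℤ) = 1 + 1 from rfl, zpow_add, zpow_one] at e
    have hrinv : r⁻¹ = r := inv_eq_of_mul_eq_one_right e
    apply hnab
    calc r = r⁻¹ := hrinv.symm
    _ = b * a := by rw [hr, mul_inv_rev, hbinv, hainv]
  have refl_ne_rot : ∀ t i : ℤ, r ^ t ≠ r ^ i * a := by
    intro t i heq
    have hcomm : a * r = r * a := by
      have h3 : a = r ^ (-i) * r ^ t := by
        rw [heq, ← mul_assoc, zpow_neg, inv_mul_cancel, one_mul]
      rw [← zpow_add] at h3
      rw [h3, ← zpow_add_one, ← zpow_one_add]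
      ring_nf
    apply hnab
    rw [hbar, mul_assoc, ← hcomm, ← mul_assoc, haa, one_mul]
  have rot_eq_rot : ∀ i j : ℤ, r ^ i = r ^ j ↔ ((orderOf r : ℤ) ∣ i - j) := by
    intro i j
    rw [orderOf_dvd_iff_zpow_eq_one, zpow_sub, mul_inv_eq_one]
  have refl_eq_refl : ∀ i j : ℤ, r ^ i * a = r ^ j * a ↔ ((orderOf r : ℤ) ∣ i - j) := by
    intro i j
    rw [mul_left_inj, rot_eq_rot]
  have habr : Subgroup.closure ({a, b} : Set G) = Subgroup.closure ({a, r} : Set G) := by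
    apply le_antisymm
    · rw [Subgroup.closure_le]
      rintro y (rfl | rfl)
      · exact Subgroup.subset_closure (by simp)
      · rw [SetLike.mem_coe, hbar]
        exact mul_mem (Subgroup.subset_closure (by simp)) (Subgroup.subset_closure (by simp))
    · rw [Subgroup.closure_le]
      rintro y (rfl | rfl)
      · exact Subgroup.subset_closure (by simp)
      · rw [SetLike.mem_coe, hr]
        exact mul_mem (Subgroup.subset_closure (by simp)) (Subgroup.subset_closure (by simp))
  have hmaxS : ∀ x : G, x ∉ S → ¬ productFree (insert x S) := by
    intro x hx hpf
    exact hx ((h.2 _ hpf (Set.subset_insert x S)) ▸ Set.mem_insert x S)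
  have hbrefl : b = r ^ (-1 : ℤ) * a := by
    rw [zpow_neg, zpow_one, hr, mul_inv_rev, hbinv, hainv, mul_assoc, haa, mul_one]
  have harefl : a = r ^ (0 : ℤ) * a := by rw [zpow_zero, one_mul]
  obtain ⟨k, hk | hk⟩ := PF13.mem_closure_pair haa harconj c
    (by rw [← habr, hclos]; exact Subgroup.subset_closure hcS)
  · -- rotation case: contradiction
    exfalso
    have hcinv : c⁻¹ = r ^ (-k) := by rw [hk, ← zpow_neg]
    set N : ℤ := (orderOf r : ℤ) with hNdef
    have trans_dvd : ∀ {x y : ℤ}, x = y → N ∣ x → N ∣ y := fun e d => e ▸ d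
    have hbmem : b ∈ Subgroup.closure ({a, c} : Set G) := by
      rw [hgen a haS c hcS hca.symm]
      exact Subgroup.subset_closure hbS
    have hacconj : a * c * a = c⁻¹ := by
      rw [hk, PF13.conj_pow haa harconj k, mul_assoc, haa, mul_one, ← zpow_neg]
    obtain ⟨m, hm | hm⟩ := PF13.mem_closure_pair haa hacconj b hbmem
    · rw [hk, ← zpow_mul] at hm
      exact refl_ne_rot (k * m) (-1) (by rw [← hm, hbrefl])
    · rw [hk, ← zpow_mul] at hm
      have hdvd : N ∣ k * m - (-1) := (refl_eq_refl _ _).mp (by rw [← hm, hbrefl])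
      have hNk : ¬ N ∣ k := by
        intro hd
        apply hc1
        have : r ^ k = r ^ (0 : ℤ) := (rot_eq_rot k 0).mpr (by simpa using hd)
        rw [hk, this, zpow_zero]
      have hNk1 : ¬ N ∣ k - 1 := by
        intro hd
        apply habS
        have : r ^ k = r ^ (1 : ℤ) := (rot_eq_rot k 1).mpr hd
        have e : c = r := by rw [hk, this, zpow_one]
        exact e ▸ hcS
      have hNk1' : ¬ N ∣ k + 1 := by
        intro hd
        apply hbaS
        have h5 : r ^ k = r ^ (-1 : ℤ) := (rot_eq_rot k (-1)).mpr (by rw [sub_neg_eq_add]; exact hd)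
        have e : c = b * a := by
          rw [hk, h5, zpow_neg, zpow_one, hr, mul_inv_rev, hbinv, hainv]
        exact e ▸ hcS
      have hord_ne : ∀ d : ℤ, N ∣ d * k → N ∣ d := by
        intro d hd
        obtain ⟨u, hu⟩ := hdvd
        obtain ⟨v, hv⟩ := hd
        refine ⟨d * u - v * m, ?_⟩
        linear_combination d * hu - m * hv
      have hgcd3 : ¬ N ∣ 3 * k := by
        intro hd
        have h3 : N ∣ 3 := hord_ne 3 hd
        have h3' : orderOf r ∣ 3 := by rw [hNdef] at h3; exact_mod_cast h3
        rcases (Nat.prime_three.eq_one_or_self_of_dvd _ h3') with e | e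
        · exact hr1 (orderOf_eq_one_iff.mp e)
        · have : N = 3 := by rw [hNdef, e]; rfl
          rw [this] at hNk hNk1 hNk1'
          omega
      have hN2k : ¬ N ∣ 2 * k := by
        intro hd
        have h2 : N ∣ 2 := hord_ne 2 hd
        have h2' : orderOf r ∣ 2 := by rw [hNdef] at h2; exact_mod_cast h2
        rcases (Nat.prime_two.eq_one_or_self_of_dvd _ h2') with e | e
        · exact hr1 (orderOf_eq_one_iff.mp e)
        · apply hr2
          rw [show (2:ℤ) = ((2:ℕ):ℤ) from rfl, zpow_natCast, ← e]
          exact pow_orderOf_eq_one r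
      have hxS : c⁻¹ ∉ S := by
        intro hmem
        rw [hSeq] at hmem
        rcases hmem with e | e | e
        · exact hca (by rw [← hainv, ← e, inv_inv])
        · exact hcb (by rw [← hbinv, ← e, inv_inv])
        · apply hN2k
          have e2 : c * c = 1 := by nth_rewrite 1 [← e]; exact inv_mul_cancel c
          rw [hk, ← zpow_add] at e2
          exact trans_dvd (by ring) (orderOf_dvd_iff_zpow_eq_one.mpr e2)
      apply hmaxS c⁻¹ hxS
      intro u hu v hv huv
      rw [hSeq] at hu hv huv
      simp only [Set.mem_insert_iff, Set.mem_singleton_iff] at hu hv huv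
      have hform : ∀ u : G, u = c⁻¹ ∨ u = a ∨ u = b ∨ u = c →
          (∃ i : ℤ, u = r ^ i ∧ (i = k ∨ i = -k)) ∨
          (∃ i : ℤ, u = r ^ i * a ∧ (i = 0 ∨ i = -1)) := by
        rintro u (rfl | rfl | rfl | rfl)
        · exact Or.inl ⟨-k, hcinv, Or.inr rfl⟩
        · exact Or.inr ⟨0, harefl, Or.inl rfl⟩
        · exact Or.inr ⟨-1, hbrefl, Or.inr rfl⟩
        · exact Or.inl ⟨k, hk, Or.inl rfl⟩
      rcases hform u hu with ⟨i, rfl, hi⟩ | ⟨i, rfl, hi⟩ <;>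
        rcases hform v hv with ⟨j, rfl, hj⟩ | ⟨j, rfl, hj⟩
      · rw [← zpow_add] at huv
        rcases huv with e | e | e | e
        · have dvd := (rot_eq_rot _ _).mp (e.trans hcinv)
          rcases hi with rfl | rfl <;> rcases hj with rfl | rfl <;>
            first
              | (refine hNk (trans_dvd ?_ dvd); ring1)
              | (refine hNk (dvd_neg.mp (trans_dvd ?_ dvd)); ring1)
              | (refine hNk1 (trans_dvd ?_ dvd); ring1)
              | (refine hNk1 (dvd_neg.mp (trans_dvd ?_ dvd)); ring1)
              | (refine hNk1' (trans_dvd ?_ dvd); ring1)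
              | (refine hNk1' (dvd_neg.mp (trans_dvd ?_ dvd)); ring1)
              | (refine hgcd3 (trans_dvd ?_ dvd); ring1)
              | (refine hgcd3 (dvd_neg.mp (trans_dvd ?_ dvd)); ring1)
              | (refine hN2k (trans_dvd ?_ dvd); ring1)
              | (refine hN2k (dvd_neg.mp (trans_dvd ?_ dvd)); ring1)
        · exact refl_ne_rot _ 0 (e.trans harefl)
        · exact refl_ne_rot _ (-1) (e.trans hbrefl)
        · have dvd := (rot_eq_rot _ _).mp (e.trans hk)
          rcases hi with rfl | rfl <;> rcases hj with rfl | rfl <;>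
            first
              | (refine hNk (trans_dvd ?_ dvd); ring1)
              | (refine hNk (dvd_neg.mp (trans_dvd ?_ dvd)); ring1)
              | (refine hNk1 (trans_dvd ?_ dvd); ring1)
              | (refine hNk1 (dvd_neg.mp (trans_dvd ?_ dvd)); ring1)
              | (refine hNk1' (trans_dvd ?_ dvd); ring1)
              | (refine hNk1' (dvd_neg.mp (trans_dvd ?_ dvd)); ring1)
              | (refine hgcd3 (trans_dvd ?_ dvd); ring1)
              | (refine hgcd3 (dvd_neg.mp (trans_dvd ?_ dvd)); ring1)
              | (refine hN2k (trans_dvd ?_ dvd); ring1)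
              | (refine hN2k (dvd_neg.mp (trans_dvd ?_ dvd)); ring1)
      · rw [← mul_assoc, ← zpow_add] at huv
        rcases huv with e | e | e | e
        · exact refl_ne_rot _ _ ((e.trans hcinv).symm)
        · have dvd := (refl_eq_refl _ _).mp (e.trans harefl)
          rcases hi with rfl | rfl <;> rcases hj with rfl | rfl <;>
            first
              | (refine hNk (trans_dvd ?_ dvd); ring1)
              | (refine hNk (dvd_neg.mp (trans_dvd ?_ dvd)); ring1)
              | (refine hNk1 (trans_dvd ?_ dvd); ring1)
              | (refine hNk1 (dvd_neg.mp (trans_dvd ?_ dvd)); ring1)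
              | (refine hNk1' (trans_dvd ?_ dvd); ring1)
              | (refine hNk1' (dvd_neg.mp (trans_dvd ?_ dvd)); ring1)
        · have dvd := (refl_eq_refl _ _).mp (e.trans hbrefl)
          rcases hi with rfl | rfl <;> rcases hj with rfl | rfl <;>
            first
              | (refine hNk (trans_dvd ?_ dvd); ring1)
              | (refine hNk (dvd_neg.mp (trans_dvd ?_ dvd)); ring1)
              | (refine hNk1 (trans_dvd ?_ dvd); ring1)
              | (refine hNk1 (dvd_neg.mp (trans_dvd ?_ dvd)); ring1)
              | (refine hNk1' (trans_dvd ?_ dvd); ring1)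
              | (refine hNk1' (dvd_neg.mp (trans_dvd ?_ dvd)); ring1)
        · exact refl_ne_rot _ _ ((e.trans hk).symm)
      · rw [mul_assoc, PF13.conj_pow haa harconj, ← mul_assoc, ← zpow_add] at huv
        rcases huv with e | e | e | e
        · exact refl_ne_rot _ _ ((e.trans hcinv).symm)
        · have dvd := (refl_eq_refl _ _).mp (e.trans harefl)
          rcases hi with rfl | rfl <;> rcases hj with rfl | rfl <;>
            first
              | (refine hNk (trans_dvd ?_ dvd); ring1)
              | (refine hNk (dvd_neg.mp (trans_dvd ?_ dvd)); ring1)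
              | (refine hNk1 (trans_dvd ?_ dvd); ring1)
              | (refine hNk1 (dvd_neg.mp (trans_dvd ?_ dvd)); ring1)
              | (refine hNk1' (trans_dvd ?_ dvd); ring1)
              | (refine hNk1' (dvd_neg.mp (trans_dvd ?_ dvd)); ring1)
        · have dvd := (refl_eq_refl _ _).mp (e.trans hbrefl)
          rcases hi with rfl | rfl <;> rcases hj with rfl | rfl <;>
            first
              | (refine hNk (trans_dvd ?_ dvd); ring1)
              | (refine hNk (dvd_neg.mp (trans_dvd ?_ dvd)); ring1)
              | (refine hNk1 (trans_dvd ?_ dvd); ring1)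
              | (refine hNk1 (dvd_neg.mp (trans_dvd ?_ dvd)); ring1)
              | (refine hNk1' (trans_dvd ?_ dvd); ring1)
              | (refine hNk1' (dvd_neg.mp (trans_dvd ?_ dvd)); ring1)
        · exact refl_ne_rot _ _ ((e.trans hk).symm)
      · rw [mul_assoc, ← mul_assoc a, PF13.conj_pow haa harconj, mul_assoc, haa, mul_one,
          ← zpow_add] at huv
        rcases huv with e | e | e | e
        · have dvd := (rot_eq_rot _ _).mp (e.trans hcinv)
          rcases hi with rfl | rfl <;> rcases hj with rfl | rfl <;>
            first
              | (refine hNk (trans_dvd ?_ dvd); ring1)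
              | (refine hNk (dvd_neg.mp (trans_dvd ?_ dvd)); ring1)
              | (refine hNk1 (trans_dvd ?_ dvd); ring1)
              | (refine hNk1 (dvd_neg.mp (trans_dvd ?_ dvd)); ring1)
              | (refine hNk1' (trans_dvd ?_ dvd); ring1)
              | (refine hNk1' (dvd_neg.mp (trans_dvd ?_ dvd)); ring1)
        · exact refl_ne_rot _ 0 (e.trans harefl)
        · exact refl_ne_rot _ (-1) (e.trans hbrefl)
        · have dvd := (rot_eq_rot _ _).mp (e.trans hk)
          rcases hi with rfl | rfl <;> rcases hj with rfl | rfl <;>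
            first
              | (refine hNk (trans_dvd ?_ dvd); ring1)
              | (refine hNk (dvd_neg.mp (trans_dvd ?_ dvd)); ring1)
              | (refine hNk1 (trans_dvd ?_ dvd); ring1)
              | (refine hNk1 (dvd_neg.mp (trans_dvd ?_ dvd)); ring1)
              | (refine hNk1' (trans_dvd ?_ dvd); ring1)
              | (refine hNk1' (dvd_neg.mp (trans_dvd ?_ dvd)); ring1)
  · -- reflection case
    have arconj : ∀ z : ℤ, r ^ z * a = a * r ^ (-z) := by
      intro z; rw [PF13.conj_pow haa harconj, neg_neg]
    have hdvd_one : ¬ ((orderOf r : ℤ) ∣ 1) := by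
      intro hd
      have h1 : orderOf r ∣ 1 := by exact_mod_cast hd
      exact hr1 (orderOf_eq_one_iff.mp (Nat.dvd_one.mp h1))
    have hdvd_two : ¬ ((orderOf r : ℤ) ∣ 2) := by
      intro hd
      have h2 : orderOf r ∣ 2 := by exact_mod_cast hd
      rcases Nat.prime_two.eq_one_or_self_of_dvd _ h2 with e | e
      · exact hr1 (orderOf_eq_one_iff.mp e)
      · exact hr2 (by rw [show (2:ℤ) = ((2:ℕ):ℤ) from rfl, zpow_natCast, ← e]
                      exact pow_orderOf_eq_one r)
    have hreflmem : ∀ m : ℤ, r ^ m * a ∈ S := by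
      intro m
      by_contra hx
      apply hmaxS _ hx
      intro u hu v hv huv
      rw [hSeq] at hu hv huv
      simp only [Set.mem_insert_iff, Set.mem_singleton_iff] at hu hv huv
      have hform : ∀ u : G, u = r ^ m * a ∨ u = a ∨ u = b ∨ u = c → ∃ i : ℤ, u = r ^ i * a := by
        rintro u (rfl | rfl | rfl | rfl)
        · exact ⟨m, rfl⟩
        · exact ⟨0, harefl⟩
        · exact ⟨-1, hbrefl⟩
        · exact ⟨k, hk⟩
      obtain ⟨i, rfl⟩ := hform u hu
      obtain ⟨j, rfl⟩ := hform v hv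
      rw [mul_assoc, ← mul_assoc a, PF13.conj_pow haa harconj, mul_assoc, haa, mul_one,
        ← zpow_add] at huv
      rcases huv with e | e | e | e
      · exact refl_ne_rot _ _ e
      · exact refl_ne_rot _ 0 (e.trans harefl)
      · exact refl_ne_rot _ (-1) (e.trans hbrefl)
      · exact refl_ne_rot _ k (e.trans hk)
    have hc_ra : c = r ^ (1:ℤ) * a := by
      have h1 := hreflmem 1
      rw [hSeq] at h1
      rcases h1 with e | e | e
      · exact absurd (by simpa using (refl_eq_refl 1 0).mp (e.trans harefl)) hdvd_one
      · exact absurd (by simpa using (refl_eq_refl 1 (-1)).mp (e.trans hbrefl)) hdvd_two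
      · exact e.symm
    have hr3 : r ^ (3:ℤ) = 1 := by
      have h2 := hreflmem 2
      rw [hSeq] at h2
      rcases h2 with e | e | e
      · exact absurd (by simpa using (refl_eq_refl 2 0).mp (e.trans harefl)) hdvd_two
      · exact orderOf_dvd_iff_zpow_eq_one.mp
          (by simpa using (refl_eq_refl 2 (-1)).mp (e.trans hbrefl))
      · exact absurd (by simpa using (refl_eq_refl 2 1).mp (e.trans hc_ra)) hdvd_one
    have hr3n : r ^ (3:ℕ) = 1 := by
      have := hr3
      rw [show (3:ℤ) = ((3:ℕ):ℤ) from rfl] at this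
      rwa [zpow_natCast] at this
    have hordr : orderOf r = 3 := orderOf_eq_prime hr3n hr1
    have hc2 : orderOf c = 2 := by
      have hcc : c * c = 1 := by
        rw [hc_ra, mul_assoc, ← mul_assoc a, PF13.conj_pow haa harconj, mul_assoc, haa,
          mul_one, ← zpow_add]
        norm_num
      exact orderOf_eq_prime (by rw [pow_two]; exact hcc) hc1
    have key : ∀ z : ℤ, r ^ ((((z : ZMod 3)).val : ℕ) : ℤ) = r ^ z := by
      intro z
      rw [ZMod.val_intCast, ← zpow_eq_zpow_emod' z hr3n]
    have castval : ∀ t : ZMod 3, (((t.val : ℤ) : ZMod 3)) = t := by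
      intro t
      push_cast [ZMod.natCast_val]
      simp
    have keyZ : ∀ (t : ZMod 3) (z : ℤ), t = (z : ZMod 3) → r ^ ((t.val : ℕ) : ℤ) = r ^ z := by
      intro t z e
      rw [e]; exact key z
    constructor
    · have hamem : a ∈ Subgroup.closure S := Subgroup.subset_closure haS
      have hrmem : r ∈ Subgroup.closure S := by
        rw [hr, ← hclos]
        exact mul_mem (Subgroup.subset_closure (by simp)) (Subgroup.subset_closure (by simp))
      let f : DihedralGroup 3 →* G :=
        { toFun := fun x => match x with
            | DihedralGroup.r i => r ^ ((i.val : ℕ) : ℤ)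
            | DihedralGroup.sr i => a * r ^ ((i.val : ℕ) : ℤ)
          map_one' := by
            show r ^ (((0 : ZMod 3).val : ℕ) : ℤ) = 1
            simp
          map_mul' := by
            rintro (i | i) (j | j)
            · show r ^ ((((i+j) : ZMod 3).val : ℕ) : ℤ) = r ^ ((i.val : ℕ):ℤ) * r ^ ((j.val : ℕ):ℤ)
              rw [← zpow_add]
              exact keyZ (i+j) ((i.val : ℤ) + (j.val : ℤ))
                (by rw [Int.cast_add, castval, castval])
            · show a * r ^ ((((j-i) : ZMod 3).val : ℕ) : ℤ) =
                r ^ ((i.val : ℕ):ℤ) * (a * r ^ ((j.val : ℕ):ℤ))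
              rw [← mul_assoc, arconj, mul_assoc, ← zpow_add]
              exact congrArg (fun w => a * w) (keyZ (j-i) (-(i.val : ℤ) + (j.val : ℤ))
                (by rw [Int.cast_add, Int.cast_neg, castval, castval, neg_add_eq_sub]))
            · show a * r ^ ((((i+j) : ZMod 3).val : ℕ) : ℤ) =
                (a * r ^ ((i.val : ℕ):ℤ)) * r ^ ((j.val : ℕ):ℤ)
              rw [mul_assoc, ← zpow_add]
              exact congrArg (fun w => a * w) (keyZ (i+j) ((i.val : ℤ) + (j.val : ℤ))
                (by rw [Int.cast_add, castval, castval]))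
            · show r ^ ((((j-i) : ZMod 3).val : ℕ) : ℤ) =
                (a * r ^ ((i.val : ℕ):ℤ)) * (a * r ^ ((j.val : ℕ):ℤ))
              rw [mul_assoc, ← mul_assoc (r ^ ((i.val : ℕ):ℤ)), arconj, mul_assoc,
                ← mul_assoc a a, haa, one_mul, ← zpow_add]
              exact keyZ (j-i) (-(i.val : ℤ) + (j.val : ℤ))
                (by rw [Int.cast_add, Int.cast_neg, castval, castval, neg_add_eq_sub]) }
      have hmem : ∀ x : DihedralGroup 3, f x ∈ Subgroup.closure S := by
        rintro (i | i)
        · exact zpow_mem hrmem _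
        · exact mul_mem hamem (zpow_mem hrmem _)
      let f' : DihedralGroup 3 →* ↥(Subgroup.closure S) :=
        f.codRestrict (Subgroup.closure S) hmem
      have hinj : Function.Injective f' := by
        rw [injective_iff_map_eq_one]
        rintro (i | i) he
        · have he' : r ^ ((i.val : ℕ) : ℤ) = 1 := congrArg Subtype.val he
          have hdv : ((3:ℕ):ℤ) ∣ ((i.val : ℕ) : ℤ) := by
            rw [show ((3:ℕ):ℤ) = ((orderOf r : ℕ) : ℤ) by rw [hordr]]
            exact orderOf_dvd_iff_zpow_eq_one.mpr he'
          have hdv' : (3:ℕ) ∣ i.val := by exact_mod_cast hdv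
          have hlt : i.val < 3 := ZMod.val_lt i
          have hv0 : i.val = 0 := by omega
          show DihedralGroup.r i = 1
          rw [(ZMod.val_eq_zero i).mp hv0]
          exact DihedralGroup.one_def.symm
        · exfalso
          have he' : a * r ^ ((i.val : ℕ) : ℤ) = 1 := congrArg Subtype.val he
          refine refl_ne_rot (-((i.val : ℕ) : ℤ)) 0 ?_
          rw [zpow_zero, one_mul, zpow_neg]
          exact (eq_inv_of_mul_eq_one_left he').symm
      have hsurj : Function.Surjective f' := by
        rintro ⟨x, hx⟩
        rw [← hclos] at hx
        obtain ⟨z, hz | hz⟩ := PF13.mem_closure_pair haa harconj x (habr ▸ hx)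
        · refine ⟨DihedralGroup.r ((z : ℤ) : ZMod 3), Subtype.ext ?_⟩
          show r ^ (((((z : ℤ) : ZMod 3)).val : ℕ) : ℤ) = x
          rw [hz]; exact key z
        · refine ⟨DihedralGroup.sr ((-z : ℤ) : ZMod 3), Subtype.ext ?_⟩
          show a * r ^ (((((-z : ℤ) : ZMod 3)).val : ℕ) : ℤ) = x
          rw [hz, arconj]
          exact congrArg (fun w => a * w) (key (-z))
      exact ⟨(MulEquiv.ofBijective f' ⟨hinj, hsurj⟩).symm⟩
    · intro s hs
      rw [hSeq] at hs
      rcases hs with rfl | rfl | rfl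
      · exact ha2
      · exact hb2
      · exact hc2
end
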